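/- arXiv:1504.03166 — 6 statements merged into one kernel-verified Lean document; each statement's English description precedes it below -/
import Mathlib

section
/- Let h > 0, ρ > 0 and α ∈ (0, π). Let T be the open triangle in ℝ² with vertices (0,0), (h,0), (hρ cos α, hρ sin α), and let Γ = {(t,0) : t ∈ [0,h]}. Let T̂ be the open triangle with vertices (0,0), (1,0), (0,1) and Γ̂ = {(t,0) : t ∈ [0,1]}. Suppose Ĉ ≥ 0 is such that every continuously differentiable function ŵ on ℝ² with ∫₀¹ ŵ(t,0) dt = 0 satisfies ‖ŵ‖_{T̂} ≤ Ĉ ‖∇ŵ‖_{T̂}. Then every continuously differentiable function w on ℝ² with ∫₀^h w(t,0) dt = 0 satisfies ‖w‖_T ≤ μ_leg(ρ,α)^{1/2} · Ĉ · h · ‖∇w‖_T, where μ_leg(ρ,α) = (1/2)(1 + ρ² + (1 + ρ⁴ + 2ρ² cos 2α)^{1/2}). -/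
open MeasureTheory Real

noncomputable def pt (a b : ℝ) : EuclideanSpace ℝ (Fin 2) := WithLp.toLp 2 ![a, b]

noncomputable def tri (A B C : EuclideanSpace ℝ (Fin 2)) : Set (EuclideanSpace ℝ (Fin 2)) :=
  interior (convexHull ℝ {A, B, C})

noncomputable def Fmap (h ρ c s : ℝ) : EuclideanSpace ℝ (Fin 2) →ₗ[ℝ] EuclideanSpace ℝ (Fin 2) where
  toFun v := pt (h * v 0 + h*ρ*c * v 1) (h*ρ*s * v 1)
  map_add' x y := by ext i; fin_cases i <;> simp [pt, PiLp.add_apply] <;> ring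
  map_smul' m x := by ext i; fin_cases i <;> simp [pt, PiLp.smul_apply, smul_eq_mul] <;> ring

theorem Fmap_apply (h ρ c s a b : ℝ) : Fmap h ρ c s (pt a b) = pt (h*a + h*ρ*c*b) (h*ρ*s*b) := by
  simp [Fmap, pt]

theorem Fmap_det (h ρ c s : ℝ) : LinearMap.det (Fmap h ρ c s) = h * (h*ρ*s) := by
  have b := (EuclideanSpace.basisFun (Fin 2) ℝ).toBasis
  rw [← LinearMap.det_toMatrix (EuclideanSpace.basisFun (Fin 2) ℝ).toBasis]
  rw [Matrix.det_fin_two]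
  simp [LinearMap.toMatrix_apply, Fmap, pt, EuclideanSpace.basisFun_apply]

theorem habs (S Q : ℝ) (hpos : 0 < S) (hQ : 0 ≤ 4*S*Q) : 0 ≤ Q := by nlinarith [hQ, hpos]

theorem quadbound (ρ c S v0 v1 : ℝ) (hS : 0 ≤ S) (hS2 : S^2 = 1 + ρ^4 + 2*ρ^2*(2*c^2-1)) :
    v0^2 + 2*ρ*c*v0*v1 + ρ^2*v1^2 ≤ (1+ρ^2+S)/2 * (v0^2+v1^2) := by
  have key : 4*S*(((1+ρ^2+S)/2)*(v0^2+v1^2) - (v0^2+2*ρ*c*v0*v1+ρ^2*v1^2)) =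
      ((ρ^2-1+S)*v0 - 2*ρ*c*v1)^2 + ((1-ρ^2+S)*v1 - 2*ρ*c*v0)^2 + (v0^2+v1^2)*(S^2 - ((1-ρ^2)^2+4*ρ^2*c^2)) := by
    ring
  rcases eq_or_lt_of_le hS with h0 | hpos
  · have h1 : (1-ρ^2)^2 + (2*ρ*c)^2 = 0 := by nlinarith
    have hρ1 : ρ^2 = 1 := by nlinarith [sq_nonneg (1-ρ^2), sq_nonneg (2*ρ*c)]
    have hc : ρ*c = 0 := by nlinarith [sq_nonneg (1-ρ^2), sq_nonneg (2*ρ*c)]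
    have e1 : ρ^2*v1^2 = v1^2 := by rw [hρ1]; ring
    have e2 : ρ*c*(v0*v1) = 0 := by rw [hc]; ring
    have e3 : S = 0 := h0.symm
    nlinarith [e1, e2, e3]
  · have h2 : 0 ≤ 4*S*(((1+ρ^2+S)/2)*(v0^2+v1^2) - (v0^2+2*ρ*c*v0*v1+ρ^2*v1^2)) := by
      rw [key, hS2]
      nlinarith [sq_nonneg ((ρ^2-1+S)*v0 - 2*ρ*c*v1), sq_nonneg ((1-ρ^2+S)*v1 - 2*ρ*c*v0)]
    have := habs S (((1+ρ^2+S)/2)*(v0^2+v1^2) - (v0^2+2*ρ*c*v0*v1+ρ^2*v1^2)) hpos h2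
    clear key h2
    linarith

theorem Fmap_norm_le (h ρ c s : ℝ) (hh : 0 ≤ h) (hcs : c^2 + s^2 = 1) (S : ℝ)
    (hS : 0 ≤ S) (hS2 : S^2 = 1+ρ^4+2*ρ^2*(2*c^2-1)) (v : EuclideanSpace ℝ (Fin 2)) :
    ‖Fmap h ρ c s v‖ ≤ (h * Real.sqrt ((1/2) * (1+ρ^2+S))) * ‖v‖ := by
  have hv : ‖v‖ = Real.sqrt (v 0^2 + v 1^2) := by
    rw [EuclideanSpace.norm_eq]; simp [Fin.sum_univ_two, sq_abs]
  have hFv : ‖Fmap h ρ c s v‖ = Real.sqrt ((h*v 0 + h*ρ*c*v 1)^2 + (h*ρ*s*v 1)^2) := by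
    rw [EuclideanSpace.norm_eq]; simp [Fmap, pt, Fin.sum_univ_two, sq_abs]
  rw [hv, hFv]
  have hrhs : Real.sqrt (h^2 * ((1/2) * (1+ρ^2+S)) * (v 0^2 + v 1^2))
      = (h * Real.sqrt ((1/2) * (1+ρ^2+S))) * Real.sqrt (v 0^2 + v 1^2) := by
    rw [Real.sqrt_mul (by positivity), Real.sqrt_mul (sq_nonneg h), Real.sqrt_sq hh]
  rw [← hrhs]
  apply Real.sqrt_le_sqrt
  have hq := quadbound ρ c S (v 0) (v 1) hS hS2
  have e : (h*v 0 + h*ρ*c*v 1)^2 + (h*ρ*s*v 1)^2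
      = h^2*(v 0^2 + 2*ρ*c*v 0*v 1 + ρ^2*v 1^2) := by
    linear_combination (h^2*ρ^2*(v 1)^2) * hcs
  rw [e]
  calc h^2*(v 0^2 + 2*ρ*c*v 0*v 1 + ρ^2*v 1^2) ≤ h^2*((1+ρ^2+S)/2 * (v 0^2+v 1^2)) :=
        mul_le_mul_of_nonneg_left hq (sq_nonneg h)
    _ = h^2 * ((1/2) * (1+ρ^2+S)) * (v 0^2 + v 1^2) := by ring

theorem Fmap_inj (h ρ c s : ℝ) (hh : h ≠ 0) (hρ : ρ ≠ 0) (hs : s ≠ 0) :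
    Function.Injective (Fmap h ρ c s) := by
  intro x y hxy
  have h0 : h * x 0 + h*ρ*c * x 1 = h * y 0 + h*ρ*c * y 1 := congrArg (fun v => v 0) hxy
  have h1 : h*ρ*s * x 1 = h*ρ*s * y 1 := congrArg (fun v => v 1) hxy
  have hx1 : x 1 = y 1 :=
    mul_left_cancel₀ (mul_ne_zero (mul_ne_zero hh hρ) hs) h1
  have hx0 : x 0 = y 0 := by
    rw [hx1] at h0
    have := mul_left_cancel₀ hh (by linarith : h * x 0 = h * y 0)
    exact this
  ext i
  fin_cases i <;> assumption

noncomputable def Feq (h ρ c s : ℝ) (hh : h ≠ 0) (hρ : ρ ≠ 0) (hs : s ≠ 0) :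
    EuclideanSpace ℝ (Fin 2) ≃ₗ[ℝ] EuclideanSpace ℝ (Fin 2) :=
  LinearEquiv.ofBijective (Fmap h ρ c s)
    ⟨Fmap_inj h ρ c s hh hρ hs, LinearMap.surjective_of_injective (Fmap_inj h ρ c s hh hρ hs)⟩

theorem Fmap_image_tri (h ρ c s : ℝ) (hh : h ≠ 0) (hρ : ρ ≠ 0) (hs : s ≠ 0)
    (A B C : EuclideanSpace ℝ (Fin 2)) :
    (Fmap h ρ c s) '' tri A B C = tri (Fmap h ρ c s A) (Fmap h ρ c s B) (Fmap h ρ c s C) := by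
  have hmm := (Feq h ρ c s hh hρ hs).toContinuousLinearEquiv.toHomeomorph.image_interior
    (convexHull ℝ {A, B, C})
  have hco : (Fmap h ρ c s) '' (convexHull ℝ {A, B, C})
      = convexHull ℝ {Fmap h ρ c s A, Fmap h ρ c s B, Fmap h ρ c s C} := by
    rw [(Fmap h ρ c s).image_convexHull]
    congr 1
    simp [Set.image_insert_eq]
  have hfun : ⇑((Feq h ρ c s hh hρ hs).toContinuousLinearEquiv.toHomeomorph) = ⇑(Fmap h ρ c s) := rfl
  rw [hfun, hco] at hmm
  exact hmm

theorem integrableOn_tri {g : EuclideanSpace ℝ (Fin 2) → ℝ} (hg : Continuous g)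
    (A B C : EuclideanSpace ℝ (Fin 2)) : IntegrableOn g (tri A B C) := by
  have hK : IsCompact (convexHull ℝ ({A,B,C} : Set (EuclideanSpace ℝ (Fin 2)))) :=
    (Set.toFinite _).isCompact_convexHull (𝕜 := ℝ)
  exact ((hg.continuousOn).integrableOn_compact hK).mono_set interior_subset

noncomputable def FL (h ρ c s : ℝ) : EuclideanSpace ℝ (Fin 2) →L[ℝ] EuclideanSpace ℝ (Fin 2) :=
  LinearMap.toContinuousLinearMap (Fmap h ρ c s)

theorem FL_coe (h ρ c s : ℝ) : ⇑(FL h ρ c s) = ⇑(Fmap h ρ c s) := rfl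

theorem cov (h ρ c s : ℝ) (hh : h ≠ 0) (hρ : ρ ≠ 0) (hs : s ≠ 0)
    (A B C : EuclideanSpace ℝ (Fin 2)) (g : EuclideanSpace ℝ (Fin 2) → ℝ) :
    ∫ x in (Fmap h ρ c s) '' tri A B C, g x
      = |h*(h*ρ*s)| * ∫ x in tri A B C, g (Fmap h ρ c s x) := by
  rw [← FL_coe]
  unfold tri
  rw [integral_image_eq_integral_abs_det_fderiv_smul volume
      (isOpen_interior.measurableSet) (fun x _ => ((FL h ρ c s).hasFDerivAt).hasFDerivWithinAt)
      ((Fmap_inj h ρ c s hh hρ hs).injOn) g]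
  have hdet : (FL h ρ c s).det = h*(h*ρ*s) := by
    rw [ContinuousLinearMap.det]
    rw [show ((FL h ρ c s) : EuclideanSpace ℝ (Fin 2) →ₗ[ℝ] EuclideanSpace ℝ (Fin 2))
        = Fmap h ρ c s from LinearMap.coe_toContinuousLinearMap _]
    exact Fmap_det h ρ c s
  simp only [hdet, smul_eq_mul]
  rw [MeasureTheory.integral_const_mul]

theorem stmt_1 (h ρ α : ℝ) (hh : 0 < h) (hρ : 0 < ρ) (hα : α ∈ Set.Ioo 0 π)
    (Chat : ℝ) (hChat : 0 ≤ Chat)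
    (hyp : ∀ wh : EuclideanSpace ℝ (Fin 2) → ℝ, ContDiff ℝ 1 wh →
      (∫ t in (0:ℝ)..1, wh (pt t 0)) = 0 →
      Real.sqrt (∫ x in tri (pt 0 0) (pt 1 0) (pt 0 1), (wh x) ^ 2) ≤
        Chat * Real.sqrt (∫ x in tri (pt 0 0) (pt 1 0) (pt 0 1), ‖fderiv ℝ wh x‖ ^ 2)) :
    ∀ w : EuclideanSpace ℝ (Fin 2) → ℝ, ContDiff ℝ 1 w →
      (∫ t in (0:ℝ)..h, w (pt t 0)) = 0 →
      Real.sqrt (∫ x in tri (pt 0 0) (pt h 0) (pt (h * ρ * Real.cos α) (h * ρ * Real.sin α)),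
          (w x) ^ 2) ≤
        Real.sqrt ((1/2) * (1 + ρ^2 + Real.sqrt (1 + ρ^4 + 2*ρ^2*Real.cos (2*α)))) * Chat * h *
          Real.sqrt (∫ x in tri (pt 0 0) (pt h 0) (pt (h * ρ * Real.cos α) (h * ρ * Real.sin α)),
            ‖fderiv ℝ w x‖ ^ 2) := by
  intro w hw hw0
  have hspos : 0 < Real.sin α := Real.sin_pos_of_pos_of_lt_pi hα.1 hα.2
  set c : ℝ := Real.cos α with hc
  set s : ℝ := Real.sin α with hs
  have hcs : c^2 + s^2 = 1 := by rw [hc, hs, add_comm]; exact Real.sin_sq_add_cos_sq α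
  have hX : (0:ℝ) ≤ 1 + ρ^4 + 2*ρ^2*Real.cos (2*α) := by
    rw [Real.cos_two_mul, ← hc]
    nlinarith [sq_nonneg (1-ρ^2), sq_nonneg (ρ*c)]
  set S : ℝ := Real.sqrt (1 + ρ^4 + 2*ρ^2*Real.cos (2*α)) with hSdef
  have hS0 : 0 ≤ S := Real.sqrt_nonneg _
  have hS2 : S^2 = 1 + ρ^4 + 2*ρ^2*(2*c^2-1) := by
    rw [hSdef, Real.sq_sqrt hX, Real.cos_two_mul, ← hc]
  -- abbreviations
  set K : ℝ := h * Real.sqrt ((1/2) * (1+ρ^2+S)) with hKdef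
  have hK0 : 0 ≤ K := by positivity
  set That : Set (EuclideanSpace ℝ (Fin 2)) := tri (pt 0 0) (pt 1 0) (pt 0 1) with hThat
  set T : Set (EuclideanSpace ℝ (Fin 2)) :=
    tri (pt 0 0) (pt h 0) (pt (h * ρ * c) (h * ρ * s)) with hT
  set what : EuclideanSpace ℝ (Fin 2) → ℝ := fun x => w (Fmap h ρ c s x) with hwhat
  have hwhatcd : ContDiff ℝ 1 what := hw.comp (FL h ρ c s).contDiff
  -- image of the reference triangle
  have himg : (Fmap h ρ c s) '' That = T := by
    rw [hThat, Fmap_image_tri h ρ c s hh.ne' hρ.ne' hspos.ne', hT]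
    rw [Fmap_apply, Fmap_apply, Fmap_apply]
    norm_num
  -- boundary integral of what vanishes
  have htrace : (∫ t in (0:ℝ)..1, what (pt t 0)) = 0 := by
    have e : ∀ t : ℝ, what (pt t 0) = w (pt (h*t) 0) := by
      intro t
      rw [hwhat]
      simp only
      rw [Fmap_apply]
      norm_num
    calc (∫ t in (0:ℝ)..1, what (pt t 0)) = ∫ t in (0:ℝ)..1, w (pt (h*t) 0) := by
          simp only [e]
      _ = h⁻¹ • ∫ t in (h*0:ℝ)..(h*1), w (pt t 0) :=
          intervalIntegral.integral_comp_mul_left (fun t => w (pt t 0)) hh.ne'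
      _ = 0 := by rw [mul_zero, mul_one, hw0, smul_zero]
  -- change of variables for w^2
  have hI : (∫ x in T, (w x)^2) = |h*(h*ρ*s)| * ∫ x in That, (what x)^2 := by
    rw [← himg, hThat]
    exact cov h ρ c s hh.ne' hρ.ne' hspos.ne' _ _ _ (fun y => (w y)^2)
  -- change of variables for the gradient
  have hJ : (∫ x in T, ‖fderiv ℝ w x‖^2)
      = |h*(h*ρ*s)| * ∫ x in That, ‖fderiv ℝ w (Fmap h ρ c s x)‖^2 := by
    rw [← himg, hThat]
    exact cov h ρ c s hh.ne' hρ.ne' hspos.ne' _ _ _ (fun y => ‖fderiv ℝ w y‖^2)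
  -- derivative of what
  have hnormFL : ‖FL h ρ c s‖ ≤ K := by
    apply ContinuousLinearMap.opNorm_le_bound _ hK0
    intro v
    exact Fmap_norm_le h ρ c s hh.le hcs S hS0 hS2 v
  have hder : ∀ x, fderiv ℝ what x = (fderiv ℝ w (Fmap h ρ c s x)).comp (FL h ρ c s) := by
    intro x
    have h1 : fderiv ℝ (w ∘ ⇑(FL h ρ c s)) x
        = (fderiv ℝ w ((FL h ρ c s) x)).comp (fderiv ℝ (⇑(FL h ρ c s)) x) :=
      fderiv_comp x (hw.differentiable one_ne_zero _) (FL h ρ c s).differentiableAt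
    rw [(FL h ρ c s).fderiv] at h1
    exact h1
  have hpt : ∀ x, ‖fderiv ℝ what x‖^2 ≤ K^2 * ‖fderiv ℝ w (Fmap h ρ c s x)‖^2 := by
    intro x
    rw [hder x]
    have h1 : ‖(fderiv ℝ w (Fmap h ρ c s x)).comp (FL h ρ c s)‖
        ≤ ‖fderiv ℝ w (Fmap h ρ c s x)‖ * K := by
      calc ‖(fderiv ℝ w (Fmap h ρ c s x)).comp (FL h ρ c s)‖
          ≤ ‖fderiv ℝ w (Fmap h ρ c s x)‖ * ‖FL h ρ c s‖ :=
            ContinuousLinearMap.opNorm_comp_le _ _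
        _ ≤ ‖fderiv ℝ w (Fmap h ρ c s x)‖ * K :=
            mul_le_mul_of_nonneg_left hnormFL (norm_nonneg _)
    calc ‖(fderiv ℝ w (Fmap h ρ c s x)).comp (FL h ρ c s)‖^2
        ≤ (‖fderiv ℝ w (Fmap h ρ c s x)‖ * K)^2 := by
          apply pow_le_pow_left₀ (norm_nonneg _) h1
      _ = K^2 * ‖fderiv ℝ w (Fmap h ρ c s x)‖^2 := by ring
  -- integral comparison on That
  have hJhat : (∫ x in That, ‖fderiv ℝ what x‖^2)
      ≤ K^2 * ∫ x in That, ‖fderiv ℝ w (Fmap h ρ c s x)‖^2 := by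
    rw [← MeasureTheory.integral_const_mul]
    apply MeasureTheory.setIntegral_mono_on
    · exact integrableOn_tri ((hwhatcd.continuous_fderiv one_ne_zero).norm.pow 2) _ _ _
    · apply integrableOn_tri _ _ _ _
      apply Continuous.mul continuous_const
      exact ((hw.continuous_fderiv one_ne_zero).comp (FL h ρ c s).continuous).norm.pow 2
    · exact isOpen_interior.measurableSet
    · exact fun x _ => hpt x
  -- nonnegativity facts
  have nn1 : (0:ℝ) ≤ ∫ x in That, (what x)^2 :=
    setIntegral_nonneg isOpen_interior.measurableSet (fun x _ => sq_nonneg _)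
  have nn2 : (0:ℝ) ≤ ∫ x in That, ‖fderiv ℝ w (Fmap h ρ c s x)‖^2 :=
    setIntegral_nonneg isOpen_interior.measurableSet (fun x _ => sq_nonneg _)
  set D : ℝ := |h*(h*ρ*s)| with hD
  have hD0 : 0 ≤ D := abs_nonneg _
  -- main chain
  have hhyp := hyp what hwhatcd htrace
  have step1 : Real.sqrt (∫ x in T, (w x)^2)
      = Real.sqrt D * Real.sqrt (∫ x in That, (what x)^2) := by
    rw [hI, Real.sqrt_mul hD0]
  have step2 : Real.sqrt (∫ x in That, ‖fderiv ℝ what x‖^2)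
      ≤ K * Real.sqrt (∫ x in That, ‖fderiv ℝ w (Fmap h ρ c s x)‖^2) := by
    calc Real.sqrt (∫ x in That, ‖fderiv ℝ what x‖^2)
        ≤ Real.sqrt (K^2 * ∫ x in That, ‖fderiv ℝ w (Fmap h ρ c s x)‖^2) :=
          Real.sqrt_le_sqrt hJhat
      _ = K * Real.sqrt (∫ x in That, ‖fderiv ℝ w (Fmap h ρ c s x)‖^2) := by
          rw [Real.sqrt_mul (sq_nonneg K), Real.sqrt_sq hK0]
  have step3 : Real.sqrt D * Real.sqrt (∫ x in That, ‖fderiv ℝ w (Fmap h ρ c s x)‖^2)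
      = Real.sqrt (∫ x in T, ‖fderiv ℝ w x‖^2) := by
    rw [hJ, Real.sqrt_mul hD0]
  calc Real.sqrt (∫ x in T, (w x)^2)
      = Real.sqrt D * Real.sqrt (∫ x in That, (what x)^2) := step1
    _ ≤ Real.sqrt D * (Chat * Real.sqrt (∫ x in That, ‖fderiv ℝ what x‖^2)) :=
        mul_le_mul_of_nonneg_left hhyp (Real.sqrt_nonneg _)
    _ ≤ Real.sqrt D * (Chat * (K * Real.sqrt (∫ x in That, ‖fderiv ℝ w (Fmap h ρ c s x)‖^2))) := by
        apply mul_le_mul_of_nonneg_left _ (Real.sqrt_nonneg _)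
        exact mul_le_mul_of_nonneg_left step2 hChat
    _ = Chat * K * (Real.sqrt D * Real.sqrt (∫ x in That, ‖fderiv ℝ w (Fmap h ρ c s x)‖^2)) := by
        ring
    _ = Chat * K * Real.sqrt (∫ x in T, ‖fderiv ℝ w x‖^2) := by rw [step3]
    _ = Real.sqrt ((1/2) * (1 + ρ^2 + S)) * Chat * h *
        Real.sqrt (∫ x in T, ‖fderiv ℝ w x‖^2) := by rw [hKdef]; ring
end

section
/- Let h > 0, ρ > 0 and α ∈ (0, π). Let T be the open triangle in ℝ² with vertices (0,0), (h,0), (hρ cos α, hρ sin α), and let Γ = {(t,0) : t ∈ [0,h]}. Let T̂ be the open triangle with vertices (0,0), (1,0), (0,1) and Γ̂ = {(t,0) : t ∈ [0,1]}. Suppose Ĉ ≥ 0 is such that every continuously differentiable function ŵ on ℝ² with ∫₀¹ ŵ(t,0) dt = 0 satisfies (∫₀¹ ŵ(t,0)² dt)^{1/2} ≤ Ĉ ‖∇ŵ‖_{T̂}. Then every continuously differentiable function w on ℝ² with ∫₀^h w(t,0) dt = 0 satisfies (∫₀^h w(t,0)² dt)^{1/2} ≤ (μ_leg(ρ,α)/(ρ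 sin α))^{1/2} · Ĉ · h^{1/2} · ‖∇w‖_T, where μ_leg(ρ,α) = (1/2)(1 + ρ² + (1 + ρ⁴ + 2ρ² cos 2α)^{1/2}). -/
open MeasureTheory Real

noncomputable def Lm (a b c : ℝ) : EuclideanSpace ℝ (Fin 2) →ₗ[ℝ] EuclideanSpace ℝ (Fin 2) where
  toFun v := WithLp.toLp 2 ![a * v 0 + b * v 1, c * v 1]
  map_add' x y := by
    ext i; fin_cases i <;> simp [PiLp.add_apply] <;> ring
  map_smul' r x := by
    ext i; fin_cases i <;> simp [PiLp.smul_apply, smul_eq_mul] <;> ring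

lemma Lm_det (a b c : ℝ) : LinearMap.det (Lm a b c) = a * c := by
  have := LinearMap.det_toMatrix (EuclideanSpace.basisFun (Fin 2) ℝ).toBasis (Lm a b c)
  rw [← this, Matrix.det_fin_two]
  simp [LinearMap.toMatrix_apply, Lm, EuclideanSpace.basisFun_apply]

noncomputable def Le (a b c : ℝ) (ha : a ≠ 0) (hc : c ≠ 0) :
    EuclideanSpace ℝ (Fin 2) ≃ₗ[ℝ] EuclideanSpace ℝ (Fin 2) :=
  LinearEquiv.ofLinear (Lm a b c) (Lm a⁻¹ (-(b/(a*c))) c⁻¹) (by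
    apply LinearMap.ext; intro v
    ext i; fin_cases i <;>
      (simp [Lm, Matrix.cons_val_zero, Matrix.cons_val_one]; field_simp; all_goals ring)) (by
    apply LinearMap.ext; intro v
    ext i; fin_cases i <;>
      (simp [Lm, Matrix.cons_val_zero, Matrix.cons_val_one]; field_simp; all_goals ring))

lemma euc_norm_sq (v : EuclideanSpace ℝ (Fin 2)) : ‖v‖^2 = (v 0)^2 + (v 1)^2 := by
  rw [EuclideanSpace.norm_eq, Real.sq_sqrt (by positivity)]
  simp [Fin.sum_univ_two, sq_abs]

lemma Lm_norm_sq (a b c : ℝ) (v : EuclideanSpace ℝ (Fin 2)) :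
    ‖Lm a b c v‖^2 = (a * v 0 + b * v 1)^2 + (c * v 1)^2 := by
  rw [euc_norm_sq]; rfl

lemma Lm_opNorm (a b c M : ℝ) (hM : 0 ≤ M)
    (hb : ∀ v : EuclideanSpace ℝ (Fin 2), ‖Lm a b c v‖^2 ≤ M * ‖v‖^2) :
    ‖LinearMap.toContinuousLinearMap (Lm a b c)‖ ≤ Real.sqrt M := by
  apply ContinuousLinearMap.opNorm_le_bound _ (Real.sqrt_nonneg M)
  intro v
  have h1 : ‖Lm a b c v‖^2 ≤ (Real.sqrt M * ‖v‖)^2 := by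
    rw [mul_pow, Real.sq_sqrt hM]; exact hb v
  calc ‖LinearMap.toContinuousLinearMap (Lm a b c) v‖
      = Real.sqrt (‖Lm a b c v‖^2) := (Real.sqrt_sq (norm_nonneg _)).symm
    _ ≤ Real.sqrt ((Real.sqrt M * ‖v‖)^2) := Real.sqrt_le_sqrt h1
    _ = Real.sqrt M * ‖v‖ := Real.sqrt_sq (by positivity)

lemma key_alg (ρ α x y : ℝ) :
    (x + ρ*Real.cos α*y)^2 + (ρ*Real.sin α*y)^2 ≤
      ((1/2) * (1 + ρ^2 + Real.sqrt (1 + ρ^4 + 2*ρ^2*Real.cos (2*α)))) * (x^2 + y^2) := by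
  set s := Real.sqrt (1 + ρ^4 + 2*ρ^2*Real.cos (2*α)) with hs
  have hrad : 1 + ρ^4 + 2*ρ^2*Real.cos (2*α) = (1-ρ^2)^2 + (2*ρ*Real.cos α)^2 := by
    rw [Real.cos_two_mul]; ring
  have hradnn : 0 ≤ 1 + ρ^4 + 2*ρ^2*Real.cos (2*α) := by
    rw [hrad]; positivity
  have hs0 : 0 ≤ s := Real.sqrt_nonneg _
  have hs2 : s^2 = (1-ρ^2)^2 + (2*ρ*Real.cos α)^2 := by
    rw [hs, Real.sq_sqrt hradnn, hrad]
  have hsge : |1 - ρ^2| ≤ s := by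
    rw [← Real.sqrt_sq_eq_abs]
    apply Real.sqrt_le_sqrt; nlinarith [sq_nonneg (2*ρ*Real.cos α)]
  have hA : 0 ≤ ρ^2 - 1 + s := by
    have := le_trans (le_abs_self (1-ρ^2)) hsge; linarith
  have hB : 0 ≤ 1 - ρ^2 + s := by
    have := le_trans (neg_le_abs (1-ρ^2)) hsge; linarith
  have hAB : (ρ^2 - 1 + s) * (1 - ρ^2 + s) = (2*ρ*Real.cos α)^2 := by
    nlinarith [hs2]
  have hsc : Real.sin α ^2 + Real.cos α ^2 = 1 := Real.sin_sq_add_cos_sq α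
  have hy : (ρ*Real.sin α*y)^2 + (ρ*Real.cos α*y)^2 = ρ^2*y^2 := by
    linear_combination (ρ*y)^2 * hsc
  have hmain : 4*(ρ*Real.cos α)*x*y ≤ (ρ^2-1+s)*x^2 + (1-ρ^2+s)*y^2 := by
    by_cases hA0 : ρ^2 - 1 + s = 0
    · have hc : 2*ρ*Real.cos α = 0 := by
        have : (2*ρ*Real.cos α)^2 = 0 := by rw [← hAB, hA0]; ring
        exact pow_eq_zero_iff (n := 2) (by norm_num) |>.mp this
      have hz : ρ*Real.cos α = 0 := by linarith
      have h4 : 4*(ρ*Real.cos α)*x*y = 0 := by rw [hz]; ring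
      rw [hA0, h4]; nlinarith [mul_nonneg hB (sq_nonneg y)]
    · have hA' : 0 < ρ^2 - 1 + s := lt_of_le_of_ne hA (Ne.symm hA0)
      have hABy : ((ρ^2-1+s)*(1-ρ^2+s))*y^2 = (2*ρ*Real.cos α)^2*y^2 := by rw [hAB]
      nlinarith [sq_nonneg ((ρ^2-1+s)*x - 2*ρ*Real.cos α*y), hABy, hA']
  nlinarith [hmain, hy]

theorem stmt_3 (h ρ α : ℝ) (hh : 0 < h) (hρ : 0 < ρ) (hα : α ∈ Set.Ioo 0 π)
    (Chat : ℝ) (hChat : 0 ≤ Chat)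
    (hyp : ∀ wh : EuclideanSpace ℝ (Fin 2) → ℝ, ContDiff ℝ 1 wh →
      (∫ t in (0:ℝ)..1, wh (pt t 0)) = 0 →
      Real.sqrt (∫ t in (0:ℝ)..1, (wh (pt t 0)) ^ 2) ≤
        Chat * Real.sqrt (∫ x in tri (pt 0 0) (pt 1 0) (pt 0 1), ‖fderiv ℝ wh x‖ ^ 2)) :
    ∀ w : EuclideanSpace ℝ (Fin 2) → ℝ, ContDiff ℝ 1 w →
      (∫ t in (0:ℝ)..h, w (pt t 0)) = 0 →
      Real.sqrt (∫ t in (0:ℝ)..h, (w (pt t 0)) ^ 2) ≤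
        Real.sqrt (((1/2) * (1 + ρ^2 + Real.sqrt (1 + ρ^4 + 2*ρ^2*Real.cos (2*α)))) /
            (ρ * Real.sin α)) *
          Chat * Real.sqrt h *
          Real.sqrt (∫ x in tri (pt 0 0) (pt h 0) (pt (h * ρ * Real.cos α) (h * ρ * Real.sin α)),
            ‖fderiv ℝ w x‖ ^ 2) := by
  intro w hw hw0
  obtain ⟨hα0, hαπ⟩ := hα
  have hsin : 0 < Real.sin α := Real.sin_pos_of_pos_of_lt_pi hα0 hαπ
  have hh0 : h ≠ 0 := ne_of_gt hh
  set b := h * ρ * Real.cos α with hbdef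
  set c := h * ρ * Real.sin α with hcdef
  have hcpos : 0 < c := by rw [hcdef]; positivity
  have hc0 : c ≠ 0 := ne_of_gt hcpos
  set μ := ((1:ℝ)/2) * (1 + ρ^2 + Real.sqrt (1 + ρ^4 + 2*ρ^2*Real.cos (2*α))) with hμdef
  have hμpos : 0 < μ := by
    rw [hμdef]; have := Real.sqrt_nonneg (1 + ρ^4 + 2*ρ^2*Real.cos (2*α)); positivity
  set Lc := LinearMap.toContinuousLinearMap (Lm h b c) with hLcdef
  set wh := fun x => w (Lc x) with hwhdef
  have hwhC : ContDiff ℝ 1 wh := hw.comp Lc.contDiff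
  -- evaluation of Lc on points
  have hLpt : ∀ p q : ℝ, Lc (pt p q) = pt (h*p + b*q) (c*q) := by
    intro p q
    ext i
    fin_cases i <;> simp [pt, Lm, hLcdef]
  -- boundary values
  have hbval : ∀ t : ℝ, wh (pt t 0) = w (pt (h*t) 0) := by
    intro t
    have := hLpt t 0
    simp only [mul_zero, add_zero] at this
    rw [hwhdef]; simp only [this]
  -- interval integral transformations
  have hcomp : ∀ g : ℝ → ℝ, (∫ t in (0:ℝ)..1, g (h*t)) = h⁻¹ * ∫ t in (0:ℝ)..h, g t := by
    intro g
    rw [intervalIntegral.integral_comp_mul_left g hh0]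
    norm_num
  have hZ : (∫ t in (0:ℝ)..1, wh (pt t 0)) = 0 := by
    simp_rw [hbval]
    rw [hcomp (fun s => w (pt s 0)), hw0, mul_zero]
  have hSq : (∫ t in (0:ℝ)..1, (wh (pt t 0))^2) = h⁻¹ * ∫ t in (0:ℝ)..h, (w (pt t 0))^2 := by
    simp_rw [hbval]
    exact hcomp (fun s => (w (pt s 0))^2)
  -- fderiv composition
  have hwdiff : Differentiable ℝ w := hw.differentiable one_ne_zero
  have hfd : ∀ x, fderiv ℝ wh x = (fderiv ℝ w (Lc x)).comp Lc := by
    intro x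
    have : wh = w ∘ Lc := rfl
    rw [this, fderiv_comp x (hwdiff (Lc x)) Lc.differentiableAt, Lc.fderiv]
  -- operator norm bound
  have hLnorm : ‖Lc‖ ≤ Real.sqrt (h^2 * μ) := by
    apply Lm_opNorm _ _ _ _ (by positivity)
    intro v
    rw [Lm_norm_sq, euc_norm_sq]
    have hk := mul_le_mul_of_nonneg_left (key_alg ρ α (v 0) (v 1)) (sq_nonneg h)
    rw [hbdef, hcdef, hμdef]
    nlinarith [hk]
  -- pointwise gradient bound
  have hptwise : ∀ x, ‖fderiv ℝ wh x‖^2 ≤ (h^2*μ) * ‖fderiv ℝ w (Lc x)‖^2 := by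
    intro x
    rw [hfd x]
    have h1 : ‖(fderiv ℝ w (Lc x)).comp Lc‖ ≤ ‖fderiv ℝ w (Lc x)‖ * Real.sqrt (h^2*μ) :=
      le_trans (ContinuousLinearMap.opNorm_comp_le _ _)
        (mul_le_mul_of_nonneg_left hLnorm (norm_nonneg _))
    calc ‖(fderiv ℝ w (Lc x)).comp Lc‖^2
        ≤ (‖fderiv ℝ w (Lc x)‖ * Real.sqrt (h^2*μ))^2 := by
          apply pow_le_pow_left₀ (norm_nonneg _) h1
      _ = (h^2*μ) * ‖fderiv ℝ w (Lc x)‖^2 := by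
          rw [mul_pow, Real.sq_sqrt (by positivity)]; ring
  -- triangle image
  have hinj : Function.Injective (⇑Lc) := (Le h b c hh0 hc0).injective
  have himg : ⇑Lc '' (tri (pt 0 0) (pt 1 0) (pt 0 1)) = tri (pt 0 0) (pt h 0) (pt b c) := by
    have hE : ⇑Lc = ⇑((Le h b c hh0 hc0).toContinuousLinearEquiv.toHomeomorph) := rfl
    rw [tri, tri, hE, Homeomorph.image_interior]
    rw [← hE]
    have h1 : ⇑Lc = ⇑(Lm h b c) := rfl
    rw [h1, LinearMap.image_convexHull]
    rw [Set.image_insert_eq, Set.image_insert_eq, Set.image_singleton]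
    have e0 : (Lm h b c) (pt 0 0) = pt 0 0 := by
      have := hLpt 0 0; simp at this; exact this
    have e1 : (Lm h b c) (pt 1 0) = pt h 0 := by
      have := hLpt 1 0; simp at this; exact this
    have e2 : (Lm h b c) (pt 0 1) = pt b c := by
      have := hLpt 0 1; simp at this; exact this
    rw [e0, e1, e2]
  -- change of variables
  have hmeas : MeasurableSet (tri (pt 0 0) (pt 1 0) (pt 0 1)) :=
    isOpen_interior.measurableSet
  have hdet : |(Lc : EuclideanSpace ℝ (Fin 2) →L[ℝ] EuclideanSpace ℝ (Fin 2)).det| = h * c := by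
    have : (Lc : EuclideanSpace ℝ (Fin 2) →L[ℝ] EuclideanSpace ℝ (Fin 2)).det
        = LinearMap.det (Lm h b c) := rfl
    rw [this, Lm_det]
    exact abs_of_pos (by positivity)
  have hcov : (∫ x in tri (pt 0 0) (pt h 0) (pt b c), ‖fderiv ℝ w x‖^2)
      = (h*c) * ∫ x in tri (pt 0 0) (pt 1 0) (pt 0 1), ‖fderiv ℝ w (Lc x)‖^2 := by
    rw [← himg]
    rw [integral_image_eq_integral_abs_det_fderiv_smul volume hmeas
      (fun x _ => (Lc.hasFDerivAt).hasFDerivWithinAt) (hinj.injOn) (fun x => ‖fderiv ℝ w x‖^2)]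
    simp_rw [hdet, smul_eq_mul]
    rw [integral_const_mul]
  -- integrability
  have hKcompact : IsCompact (convexHull ℝ {pt 0 0, pt 1 0, pt 0 1}) := by
    apply Set.Finite.isCompact_convexHull
    exact (Set.finite_singleton _).insert _ |>.insert _
  have hcont2 : Continuous (fun x => ‖fderiv ℝ w (Lc x)‖^2) := by
    have := (hw.continuous_fderiv one_ne_zero).comp Lc.continuous
    exact (this.norm.pow 2)
  have hcont1 : Continuous (fun x => ‖fderiv ℝ wh x‖^2) :=
    (hwhC.continuous_fderiv one_ne_zero).norm.pow 2
  have hint2 : IntegrableOn (fun x => (h^2*μ) * ‖fderiv ℝ w (Lc x)‖^2)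
      (tri (pt 0 0) (pt 1 0) (pt 0 1)) volume := by
    apply IntegrableOn.mono_set _ (interior_subset)
    exact ((hcont2.const_smul (h^2*μ)).continuousOn.integrableOn_compact hKcompact)
  have hint1 : IntegrableOn (fun x => ‖fderiv ℝ wh x‖^2)
      (tri (pt 0 0) (pt 1 0) (pt 0 1)) volume := by
    apply IntegrableOn.mono_set _ (interior_subset)
    exact (hcont1.continuousOn.integrableOn_compact hKcompact)
  have hmono : (∫ x in tri (pt 0 0) (pt 1 0) (pt 0 1), ‖fderiv ℝ wh x‖^2)
      ≤ (h^2*μ) * ∫ x in tri (pt 0 0) (pt 1 0) (pt 0 1), ‖fderiv ℝ w (Lc x)‖^2 := by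
    rw [← integral_const_mul]
    exact setIntegral_mono_on hint1 hint2 hmeas (fun x _ => hptwise x)
  -- nonnegativity of integrals
  have hIw2 : 0 ≤ ∫ x in tri (pt 0 0) (pt 1 0) (pt 0 1), ‖fderiv ℝ w (Lc x)‖^2 :=
    setIntegral_nonneg hmeas (fun x _ => by positivity)
  set IT := ∫ x in tri (pt 0 0) (pt h 0) (pt b c), ‖fderiv ℝ w x‖^2 with hITdef
  have hITnn : 0 ≤ IT := by
    rw [hcov]; positivity
  have hS : (∫ x in tri (pt 0 0) (pt 1 0) (pt 0 1), ‖fderiv ℝ wh x‖^2)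
      ≤ (μ / (ρ * Real.sin α)) * IT := by
    have : (μ / (ρ * Real.sin α)) * IT
        = (h^2*μ) * ∫ x in tri (pt 0 0) (pt 1 0) (pt 0 1), ‖fderiv ℝ w (Lc x)‖^2 := by
      rw [hcov, hcdef]
      field_simp
    rw [this]
    exact hmono
  -- final assembly
  have hmain := hyp wh hwhC hZ
  have hLHS : Real.sqrt (∫ t in (0:ℝ)..h, (w (pt t 0))^2)
      = Real.sqrt h * Real.sqrt (∫ t in (0:ℝ)..1, (wh (pt t 0))^2) := by
    rw [hSq, ← Real.sqrt_mul (le_of_lt hh)]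
    congr 1
    field_simp
  have hstep : Real.sqrt (∫ x in tri (pt 0 0) (pt 1 0) (pt 0 1), ‖fderiv ℝ wh x‖^2)
      ≤ Real.sqrt (μ / (ρ * Real.sin α)) * Real.sqrt IT := by
    rw [← Real.sqrt_mul (by positivity)]
    exact Real.sqrt_le_sqrt hS
  calc Real.sqrt (∫ t in (0:ℝ)..h, (w (pt t 0))^2)
      = Real.sqrt h * Real.sqrt (∫ t in (0:ℝ)..1, (wh (pt t 0))^2) := hLHS
    _ ≤ Real.sqrt h * (Chat * Real.sqrt (∫ x in tri (pt 0 0) (pt 1 0) (pt 0 1),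
          ‖fderiv ℝ wh x‖^2)) := by
        exact mul_le_mul_of_nonneg_left hmain (Real.sqrt_nonneg h)
    _ ≤ Real.sqrt h * (Chat * (Real.sqrt (μ / (ρ * Real.sin α)) * Real.sqrt IT)) := by
        apply mul_le_mul_of_nonneg_left _ (Real.sqrt_nonneg h)
        exact mul_le_mul_of_nonneg_left hstep hChat
    _ = Real.sqrt (μ / (ρ * Real.sin α)) * Chat * Real.sqrt h * Real.sqrt IT := by ring
end

section
/- Let h > 0, ρ > 0 and α ∈ (0, π). Let T be the open triangle in ℝ² with vertices (0,0), (h,0), (hρ cos α, hρ sin α). Let T̂ be the equilateral open triangle with vertices (0,0), (1,0), (1/2, √3/2). Suppose Ĉ ≥ 0 is such that every continuously differentiable function ŵ on ℝ² with ∫_{T̂} ŵ dx̂ = 0 satisfies ‖ŵ‖_{T̂} ≤ Ĉ ‖∇ŵ‖_{T̂}. Then every continuously differentiable function w on ℝ² with ∫_T w dx = 0 satisfies ‖w‖_T ≤ μ_{π/3}(ρ,α)^{1/2} · Ĉ · h · ‖∇w‖_T, where μ_{π/3}(ρ,α) = (2/3)(1 + ρ² − ρ cos α) + 2((1/9)(1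 + ρ² − ρ cos α)² − (1/3)ρ² sin²α)^{1/2}. -/
open MeasureTheory Real

noncomputable def lmap (a b d : ℝ) : EuclideanSpace ℝ (Fin 2) →ₗ[ℝ] EuclideanSpace ℝ (Fin 2) where
  toFun x := WithLp.toLp 2 ![a * x 0 + b * x 1, d * x 1]
  map_add' x y := by
    ext i; fin_cases i <;> (simp [PiLp.add_apply]; ring)
  map_smul' c x := by
    ext i; fin_cases i <;> (simp [PiLp.smul_apply, smul_eq_mul]; ring)

noncomputable def lequiv (a b d : ℝ) (ha : a ≠ 0) (hd : d ≠ 0) :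
    EuclideanSpace ℝ (Fin 2) ≃ₗ[ℝ] EuclideanSpace ℝ (Fin 2) :=
  LinearEquiv.ofLinear (lmap a b d) (lmap a⁻¹ (-b/(a*d)) d⁻¹)
    (by ext x i; fin_cases i <;> (simp [lmap]; field_simp; try ring))
    (by ext x i; fin_cases i <;> (simp [lmap]; field_simp; try ring))

noncomputable def cle (a b d : ℝ) (ha : a ≠ 0) (hd : d ≠ 0) :
    EuclideanSpace ℝ (Fin 2) ≃L[ℝ] EuclideanSpace ℝ (Fin 2) :=
  (lequiv a b d ha hd).toContinuousLinearEquiv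

lemma cle_apply (a b d : ℝ) (ha : a ≠ 0) (hd : d ≠ 0) (x : EuclideanSpace ℝ (Fin 2)) :
    cle a b d ha hd x = WithLp.toLp 2 ![a * x 0 + b * x 1, d * x 1] := rfl

lemma cle_det_ne_zero (a b d : ℝ) (ha : a ≠ 0) (hd : d ≠ 0) :
    ((cle a b d ha hd : EuclideanSpace ℝ (Fin 2) →L[ℝ] EuclideanSpace ℝ (Fin 2))).det ≠ 0 := by
  have h1 := (lequiv a b d ha hd).isUnit_det'
  have h2 : ((cle a b d ha hd : EuclideanSpace ℝ (Fin 2) →L[ℝ] EuclideanSpace ℝ (Fin 2)) :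
      EuclideanSpace ℝ (Fin 2) →ₗ[ℝ] EuclideanSpace ℝ (Fin 2)) = (lequiv a b d ha hd : _ →ₗ[ℝ] _) := rfl
  rw [ContinuousLinearMap.det, h2]
  exact h1.ne_zero

lemma cle_image_tri (e : EuclideanSpace ℝ (Fin 2) ≃L[ℝ] EuclideanSpace ℝ (Fin 2))
    (A B C : EuclideanSpace ℝ (Fin 2)) :
    ⇑e '' tri A B C = tri (e A) (e B) (e C) := by
  unfold tri
  have h1 : ⇑e '' interior (convexHull ℝ {A,B,C}) = interior (⇑e '' convexHull ℝ {A,B,C}) :=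
    e.toHomeomorph.image_interior _
  have h2 : ⇑e '' convexHull ℝ {A,B,C} = convexHull ℝ (⇑e '' {A,B,C}) :=
    (e.toLinearEquiv.toLinearMap).image_convexHull _
  rw [h1, h2]
  simp [Set.image_insert_eq]

lemma cov_tri (e : EuclideanSpace ℝ (Fin 2) ≃L[ℝ] EuclideanSpace ℝ (Fin 2))
    (s : Set (EuclideanSpace ℝ (Fin 2))) (hs : MeasurableSet s) (g : EuclideanSpace ℝ (Fin 2) → ℝ) :
    ∫ x in ⇑e '' s, g x = |(e : EuclideanSpace ℝ (Fin 2) →L[ℝ] EuclideanSpace ℝ (Fin 2)).det| *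
      ∫ x in s, g (e x) := by
  rw [integral_image_eq_integral_abs_det_fderiv_smul volume hs
    (fun x _ => e.hasFDerivAt.hasFDerivWithinAt) e.injective.injOn g]
  simp only [smul_eq_mul]
  rw [MeasureTheory.integral_const_mul]

lemma both_nonneg (X Y β q : ℝ) (hq : 0 ≤ q) (hsum : X + Y = 4*q) (hprod : X*Y = β^2) :
    0 ≤ X ∧ 0 ≤ Y := by
  constructor
  · by_contra hx
    push_neg at hx
    have hY' : 0 < Y := by nlinarith
    nlinarith [mul_neg_of_neg_of_pos hx hY', sq_nonneg β]
  · by_contra hy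
    push_neg at hy
    have hX' : 0 < X := by nlinarith
    nlinarith [mul_neg_of_pos_of_neg hX' hy, sq_nonneg β]

lemma quad_bound (X Y β s t : ℝ) (hX : 0 ≤ X) (hY : 0 ≤ Y) (hXY : X*Y = β^2) :
    2*β*s*t ≤ X*s^2 + Y*t^2 := by
  rcases hX.eq_or_lt with hX0 | hX0
  · have hβ : β = 0 := by
      have : β^2 = 0 := by rw [← hXY, ← hX0]; ring
      exact pow_eq_zero_iff (n := 2) (by norm_num) |>.mp this
    rw [hβ, ← hX0]
    nlinarith [mul_nonneg hY (sq_nonneg t)]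
  · nlinarith [sq_nonneg (X*s - β*t), hXY]

set_option maxHeartbeats 1000000 in
theorem stmt_6 (h ρ α : ℝ) (hh : 0 < h) (hρ : 0 < ρ) (hα : α ∈ Set.Ioo 0 π)
    (Chat : ℝ) (hChat : 0 ≤ Chat)
    (hyp : ∀ wh : EuclideanSpace ℝ (Fin 2) → ℝ, ContDiff ℝ 1 wh →
      (∫ x in tri (pt 0 0) (pt 1 0) (pt (1/2) (Real.sqrt 3 / 2)), wh x) = 0 →
      Real.sqrt (∫ x in tri (pt 0 0) (pt 1 0) (pt (1/2) (Real.sqrt 3 / 2)), (wh x) ^ 2) ≤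
        Chat * Real.sqrt (∫ x in tri (pt 0 0) (pt 1 0) (pt (1/2) (Real.sqrt 3 / 2)),
          ‖fderiv ℝ wh x‖ ^ 2)) :
    ∀ w : EuclideanSpace ℝ (Fin 2) → ℝ, ContDiff ℝ 1 w →
      (∫ x in tri (pt 0 0) (pt h 0) (pt (h * ρ * Real.cos α) (h * ρ * Real.sin α)), w x) = 0 →
      Real.sqrt (∫ x in tri (pt 0 0) (pt h 0) (pt (h * ρ * Real.cos α) (h * ρ * Real.sin α)),
          (w x) ^ 2) ≤
        Real.sqrt ((2/3) * (1 + ρ^2 - ρ*Real.cos α) +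
            2 * Real.sqrt ((1/9) * (1 + ρ^2 - ρ*Real.cos α)^2 - (1/3)*ρ^2*(Real.sin α)^2)) *
          Chat * h *
          Real.sqrt (∫ x in tri (pt 0 0) (pt h 0) (pt (h * ρ * Real.cos α) (h * ρ * Real.sin α)),
            ‖fderiv ℝ w x‖ ^ 2) := by
  intro w hw hmean
  obtain ⟨hα0, hαπ⟩ := hα
  have hsin : 0 < Real.sin α := Real.sin_pos_of_pos_of_lt_pi hα0 hαπ
  have hcos1 : Real.cos α ≤ 1 := Real.cos_le_one α
  have hS3 : (0:ℝ) < Real.sqrt 3 := Real.sqrt_pos.mpr (by norm_num)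
  have hS3sq : (Real.sqrt 3)^2 = 3 := Real.sq_sqrt (by norm_num)
  have hρ2 : (ρ * Real.cos α)^2 + (ρ * Real.sin α)^2 = ρ^2 := by
    have := Real.sin_sq_add_cos_sq α
    linear_combination ρ^2 * this
  have ha : h ≠ 0 := hh.ne'
  have hddpos : 0 < 2*h/Real.sqrt 3*(ρ * Real.sin α) := by positivity
  have hdd : 2*h/Real.sqrt 3*(ρ * Real.sin α) ≠ 0 := hddpos.ne'
  set b : ℝ := 2*h/Real.sqrt 3*(ρ * Real.cos α - 1/2) with hbdef
  set dd : ℝ := 2*h/Real.sqrt 3*(ρ * Real.sin α) with hdddef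
  set B := cle h b dd ha hdd with hBdef
  set d := |(B : EuclideanSpace ℝ (Fin 2) →L[ℝ] EuclideanSpace ℝ (Fin 2)).det| with hdet
  have hd0 : 0 < d := abs_pos.mpr (cle_det_ne_zero h b dd ha hdd)
  -- vertex images
  have hv1 : B (pt 0 0) = pt 0 0 := by
    ext i; fin_cases i <;> simp [hBdef, cle_apply, pt]
  have hv2 : B (pt 1 0) = pt h 0 := by
    ext i; fin_cases i <;> simp [hBdef, cle_apply, pt]
  have hcanc : ∀ z : ℝ, 2*h/Real.sqrt 3 * z * (Real.sqrt 3 / 2) = h * z := by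
    intro z
    rw [div_mul_eq_mul_div, div_mul_eq_mul_div, div_eq_iff hS3.ne']; ring
  have hv3 : B (pt (1/2) (Real.sqrt 3 / 2)) = pt (h * ρ * Real.cos α) (h * ρ * Real.sin α) := by
    ext i; fin_cases i <;>
      (simp [hBdef, cle_apply, pt]; simp only [hbdef, hdddef]; rw [hcanc]; try ring)
  have himg : ⇑B '' tri (pt 0 0) (pt 1 0) (pt (1/2) (Real.sqrt 3 / 2)) =
      tri (pt 0 0) (pt h 0) (pt (h * ρ * Real.cos α) (h * ρ * Real.sin α)) := by
    rw [cle_image_tri, hv1, hv2, hv3]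
  have hmeasTh : MeasurableSet (tri (pt 0 0) (pt 1 0) (pt (1/2) (Real.sqrt 3 / 2))) :=
    isOpen_interior.measurableSet
  have hcov : ∀ g : EuclideanSpace ℝ (Fin 2) → ℝ,
      ∫ x in tri (pt 0 0) (pt h 0) (pt (h * ρ * Real.cos α) (h * ρ * Real.sin α)), g x =
        d * ∫ x in tri (pt 0 0) (pt 1 0) (pt (1/2) (Real.sqrt 3 / 2)), g (B x) := by
    intro g
    rw [← himg, cov_tri B _ hmeasTh g]
  -- mean zero for pulled-back function
  have hmean' : (∫ x in tri (pt 0 0) (pt 1 0) (pt (1/2) (Real.sqrt 3 / 2)), w (B x)) = 0 := by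
    have := hcov w
    rw [hmean] at this
    have := this.symm
    rcases mul_eq_zero.mp this with h' | h'
    · exact absurd h' hd0.ne'
    · exact h'
  set wh : EuclideanSpace ℝ (Fin 2) → ℝ := fun x => w (B x) with hwhdef
  have hwh : ContDiff ℝ 1 wh :=
    hw.comp (B : EuclideanSpace ℝ (Fin 2) →L[ℝ] EuclideanSpace ℝ (Fin 2)).contDiff
  have hmain := hyp wh hwh hmean'
  -- the constant
  set q : ℝ := Real.sqrt ((1/9) * (1 + ρ^2 - ρ*Real.cos α)^2 - (1/3)*ρ^2*(Real.sin α)^2) with hqdef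
  have hq0 : 0 ≤ q := Real.sqrt_nonneg _
  have harg : 0 ≤ (1/9) * (1 + ρ^2 - ρ*Real.cos α)^2 - (1/3)*ρ^2*(Real.sin α)^2 := by
    have h1 : Real.sqrt 3 * (ρ * Real.sin α) ≤ 1 + ρ^2 - ρ*Real.cos α := by
      nlinarith [sq_nonneg (ρ * Real.cos α - 1/2), sq_nonneg (ρ * Real.sin α - Real.sqrt 3/2),
        hS3sq, hρ2]
    have h2 : 0 ≤ Real.sqrt 3 * (ρ * Real.sin α) :=
      mul_nonneg hS3.le (mul_nonneg hρ.le hsin.le)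
    nlinarith [h1, h2, hS3sq]
  have hq2 : q^2 = (1/9) * (1 + ρ^2 - ρ*Real.cos α)^2 - (1/3)*ρ^2*(Real.sin α)^2 :=
    Real.sq_sqrt harg
  set μ : ℝ := (2/3) * (1 + ρ^2 - ρ*Real.cos α) + 2 * q with hμdef
  have hμ0 : 0 ≤ μ := by
    have : 0 < 1 + ρ^2 - ρ*Real.cos α := by nlinarith [sq_nonneg (ρ - 1)]
    rw [hμdef]; nlinarith
  set c : ℝ := h * Real.sqrt μ with hcdef
  have hc0 : 0 ≤ c := mul_nonneg hh.le (Real.sqrt_nonneg _)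
  have hc2 : c^2 = h^2 * μ := by rw [hcdef, mul_pow, Real.sq_sqrt hμ0]
  -- algebraic facts about b, dd
  have hb2 : b^2 = h^2 * (4/3) * (ρ * Real.cos α - 1/2)^2 := by
    rw [hbdef, mul_pow, div_pow, hS3sq]; ring
  have hdd2 : dd^2 = h^2 * (4/3) * (ρ * Real.sin α)^2 := by
    rw [hdddef, mul_pow, div_pow, hS3sq]; ring
  -- key quadratic form bound
  have hkey : ∀ s t : ℝ, (h*s + b*t)^2 + (dd*t)^2 ≤ h^2 * μ * (s^2 + t^2) := by
    intro s t
    have hsum : (h^2*μ - h^2) + (h^2*μ - (b^2 + dd^2)) = 4*h^2*q := by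
      rw [hμdef]
      linear_combination (-1 : ℝ) * hb2 - hdd2 - (4/3)*h^2*hρ2
    have hprod : (h^2*μ - h^2) * (h^2*μ - (b^2 + dd^2)) = (h*b)^2 := by
      rw [hμdef]
      linear_combination (4*h^4)*hq2
        + (-(h^2*((2/3) * (1 + ρ^2 - ρ*Real.cos α) + 2*q) - h^2) - h^2)*hb2
        + (-(h^2*((2/3) * (1 + ρ^2 - ρ*Real.cos α) + 2*q) - h^2))*hdd2
        + (-(4/3)*h^4*((2/3) * (1 + ρ^2 - ρ*Real.cos α) + 2*q))*hρ2
    obtain ⟨hX, hY⟩ := both_nonneg (h^2*μ - h^2) (h^2*μ - (b^2 + dd^2)) (h*b) (h^2*q)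
      (by positivity) (by linarith [hsum]) hprod
    have h2 := quad_bound (h^2*μ - h^2) (h^2*μ - (b^2 + dd^2)) (h*b) s t hX hY hprod
    linarith [h2]
  -- operator norm bound
  have hBnorm : ‖(B : EuclideanSpace ℝ (Fin 2) →L[ℝ] EuclideanSpace ℝ (Fin 2))‖ ≤ c := by
    apply ContinuousLinearMap.opNorm_le_bound _ hc0
    intro x
    have hxn : ‖x‖ = Real.sqrt ((x 0)^2 + (x 1)^2) := by
      rw [EuclideanSpace.norm_eq]; simp [Fin.sum_univ_two, sq_abs]
    have hBx : ‖(B : EuclideanSpace ℝ (Fin 2) →L[ℝ] EuclideanSpace ℝ (Fin 2)) x‖ =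
        Real.sqrt ((h * x 0 + b * x 1)^2 + (dd * x 1)^2) := by
      rw [EuclideanSpace.norm_eq]
      congr 1
      simp [Fin.sum_univ_two, sq_abs, ContinuousLinearEquiv.coe_coe, hBdef, cle_apply]
    rw [hBx, hxn]
    rw [show c * Real.sqrt ((x 0)^2 + (x 1)^2) = Real.sqrt (c^2 * ((x 0)^2 + (x 1)^2)) by
      rw [Real.sqrt_mul (sq_nonneg c), Real.sqrt_sq hc0]]
    apply Real.sqrt_le_sqrt
    rw [hc2]
    exact hkey (x 0) (x 1)
  -- pointwise derivative bound
  have hfd : ∀ x, fderiv ℝ wh x = (fderiv ℝ w (B x)).comp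
      (B : EuclideanSpace ℝ (Fin 2) →L[ℝ] EuclideanSpace ℝ (Fin 2)) := by
    intro x
    have : fderiv ℝ (w ∘ ⇑B) x = (fderiv ℝ w (B x)).comp (fderiv ℝ ⇑B x) :=
      fderiv_comp x ((hw.differentiable one_ne_zero) (B x)) (B.differentiableAt)
    rw [show wh = w ∘ ⇑B from rfl, this, ContinuousLinearEquiv.fderiv]
  have hptw : ∀ x, ‖fderiv ℝ wh x‖^2 ≤ c^2 * ‖fderiv ℝ w (B x)‖^2 := by
    intro x
    have h1 : ‖fderiv ℝ wh x‖ ≤ ‖fderiv ℝ w (B x)‖ * c := by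
      rw [hfd x]
      exact le_trans (ContinuousLinearMap.opNorm_comp_le _ _)
        (mul_le_mul_of_nonneg_left hBnorm (norm_nonneg _))
    calc ‖fderiv ℝ wh x‖^2 ≤ (‖fderiv ℝ w (B x)‖ * c)^2 :=
          pow_le_pow_left₀ (norm_nonneg _) h1 2
      _ = c^2 * ‖fderiv ℝ w (B x)‖^2 := by ring
  -- integrability
  have hKcomp : IsCompact (convexHull ℝ ({pt 0 0, pt 1 0, pt (1/2) (Real.sqrt 3 / 2)} :
      Set (EuclideanSpace ℝ (Fin 2)))) := by
    apply Set.Finite.isCompact_convexHull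
    exact (Set.finite_singleton _).insert _ |>.insert _
  have hcont1 : Continuous fun x => ‖fderiv ℝ wh x‖^2 :=
    ((hwh.continuous_fderiv one_ne_zero).norm).pow 2
  have hcont2 : Continuous fun x => c^2 * ‖fderiv ℝ w (B x)‖^2 :=
    continuous_const.mul (( ((hw.continuous_fderiv one_ne_zero).comp B.continuous).norm ).pow 2)
  have hint1 : IntegrableOn (fun x => ‖fderiv ℝ wh x‖^2)
      (tri (pt 0 0) (pt 1 0) (pt (1/2) (Real.sqrt 3 / 2))) volume :=
    (hcont1.continuousOn.integrableOn_compact hKcomp).mono_set interior_subset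
  have hint2 : IntegrableOn (fun x => c^2 * ‖fderiv ℝ w (B x)‖^2)
      (tri (pt 0 0) (pt 1 0) (pt (1/2) (Real.sqrt 3 / 2))) volume :=
    (hcont2.continuousOn.integrableOn_compact hKcomp).mono_set interior_subset
  have hIle : (∫ x in tri (pt 0 0) (pt 1 0) (pt (1/2) (Real.sqrt 3 / 2)), ‖fderiv ℝ wh x‖^2) ≤
      c^2 * ∫ x in tri (pt 0 0) (pt 1 0) (pt (1/2) (Real.sqrt 3 / 2)), ‖fderiv ℝ w (B x)‖^2 := by
    rw [← MeasureTheory.integral_const_mul]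
    exact setIntegral_mono_on hint1 hint2 hmeasTh (fun x _ => hptw x)
  -- put everything together
  have e1 : (∫ x in tri (pt 0 0) (pt h 0) (pt (h * ρ * Real.cos α) (h * ρ * Real.sin α)),
      (w x)^2) = d * ∫ x in tri (pt 0 0) (pt 1 0) (pt (1/2) (Real.sqrt 3 / 2)), (wh x)^2 :=
    hcov (fun y => (w y)^2)
  have e2 : (∫ x in tri (pt 0 0) (pt h 0) (pt (h * ρ * Real.cos α) (h * ρ * Real.sin α)),
      ‖fderiv ℝ w x‖^2) = d * ∫ x in tri (pt 0 0) (pt 1 0) (pt (1/2) (Real.sqrt 3 / 2)),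
      ‖fderiv ℝ w (B x)‖^2 := hcov (fun y => ‖fderiv ℝ w y‖^2)
  set I1 := ∫ x in tri (pt 0 0) (pt 1 0) (pt (1/2) (Real.sqrt 3 / 2)), (wh x)^2 with hI1
  set I2 := ∫ x in tri (pt 0 0) (pt 1 0) (pt (1/2) (Real.sqrt 3 / 2)), ‖fderiv ℝ wh x‖^2 with hI2
  set I3 := ∫ x in tri (pt 0 0) (pt 1 0) (pt (1/2) (Real.sqrt 3 / 2)), ‖fderiv ℝ w (B x)‖^2
    with hI3
  have hI2nn : 0 ≤ I2 := setIntegral_nonneg hmeasTh (fun x _ => sq_nonneg _)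
  have hI3nn : 0 ≤ I3 := setIntegral_nonneg hmeasTh (fun x _ => sq_nonneg _)
  calc Real.sqrt (∫ x in tri (pt 0 0) (pt h 0) (pt (h*ρ*Real.cos α) (h*ρ*Real.sin α)), (w x)^2)
      = Real.sqrt d * Real.sqrt I1 := by rw [e1, Real.sqrt_mul hd0.le]
    _ ≤ Real.sqrt d * (Chat * Real.sqrt I2) :=
        mul_le_mul_of_nonneg_left hmain (Real.sqrt_nonneg d)
    _ ≤ Real.sqrt d * (Chat * (c * Real.sqrt I3)) := by
        apply mul_le_mul_of_nonneg_left _ (Real.sqrt_nonneg d)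
        apply mul_le_mul_of_nonneg_left _ hChat
        rw [show c * Real.sqrt I3 = Real.sqrt (c^2 * I3) by
          rw [Real.sqrt_mul (sq_nonneg c), Real.sqrt_sq hc0]]
        exact Real.sqrt_le_sqrt hIle
    _ = Real.sqrt μ * Chat * h * (Real.sqrt d * Real.sqrt I3) := by rw [hcdef]; ring
    _ = Real.sqrt μ * Chat * h *
        Real.sqrt (∫ x in tri (pt 0 0) (pt h 0) (pt (h*ρ*Real.cos α) (h*ρ*Real.sin α)),
          ‖fderiv ℝ w x‖^2) := by rw [e2, Real.sqrt_mul hd0.le]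
end

section
/- Let h > 0, ρ > 0 and α ∈ (0, π). Let T be the open triangle in ℝ² with vertices (0,0), (h,0), (hρ cos α, hρ sin α), and let Γ = {(t,0) : t ∈ [0,h]}. Suppose C ≥ 0 is such that every continuously differentiable function v on ℝ² with ∫₀^h v(t,0) dt = 0 satisfies ‖v‖_T ≤ C ‖∇v‖_T. Then every continuously differentiable function w on ℝ² with ∫_T w dx = 0 also satisfies ‖w‖_T ≤ C ‖∇w‖_T. In other words, the Poincaré constant for functions with zero mean value over T does not exceed the Poincaré-type constant for functions with zero mean trace on Γ. -/
open MeasureTheory Real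

theorem stmt_13 (h ρ α : ℝ) (hh : 0 < h) (hρ : 0 < ρ) (hα : α ∈ Set.Ioo 0 π)
    (C : ℝ) (hC : 0 ≤ C)
    (hyp : ∀ v : EuclideanSpace ℝ (Fin 2) → ℝ, ContDiff ℝ 1 v →
      (∫ t in (0:ℝ)..h, v (pt t 0)) = 0 →
      Real.sqrt (∫ x in tri (pt 0 0) (pt h 0) (pt (h * ρ * Real.cos α) (h * ρ * Real.sin α)),
          (v x) ^ 2) ≤
        C * Real.sqrt (∫ x in tri (pt 0 0) (pt h 0) (pt (h * ρ * Real.cos α) (h * ρ * Real.sin α)),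
          ‖fderiv ℝ v x‖ ^ 2)) :
    ∀ w : EuclideanSpace ℝ (Fin 2) → ℝ, ContDiff ℝ 1 w →
      (∫ x in tri (pt 0 0) (pt h 0) (pt (h * ρ * Real.cos α) (h * ρ * Real.sin α)), w x) = 0 →
      Real.sqrt (∫ x in tri (pt 0 0) (pt h 0) (pt (h * ρ * Real.cos α) (h * ρ * Real.sin α)),
          (w x) ^ 2) ≤
        C * Real.sqrt (∫ x in tri (pt 0 0) (pt h 0) (pt (h * ρ * Real.cos α) (h * ρ * Real.sin α)),
          ‖fderiv ℝ w x‖ ^ 2) := by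
  intro w hw hw0
  set A := pt 0 0 with hA
  set B := pt h 0 with hB
  set P := pt (h * ρ * Real.cos α) (h * ρ * Real.sin α) with hP
  set T := tri A B P with hT
  have hTmeas : MeasurableSet T := isOpen_interior.measurableSet
  have hfin : ({A, B, P} : Set (EuclideanSpace ℝ (Fin 2))).Finite :=
    ((Set.finite_singleton P).insert B).insert A
  have hcomp : IsCompact (convexHull ℝ ({A, B, P} : Set (EuclideanSpace ℝ (Fin 2)))) :=
    hfin.isCompact_convexHull ℝ
  have hTsub : T ⊆ convexHull ℝ ({A, B, P} : Set (EuclideanSpace ℝ (Fin 2))) := interior_subset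
  have hvol : volume T < ⊤ := lt_of_le_of_lt (measure_mono hTsub) hcomp.measure_lt_top
  set c := (∫ t in (0:ℝ)..h, w (pt t 0)) / h with hc
  set v := fun x : EuclideanSpace ℝ (Fin 2) => w x - c with hv
  have hvdiff : ContDiff ℝ 1 v := hw.sub contDiff_const
  have hpt : Continuous fun t : ℝ => pt t 0 := by
    have h1 : Continuous fun t : ℝ => (![t, 0] : Fin 2 → ℝ) := by
      apply continuous_pi
      intro i
      fin_cases i
      · simpa using continuous_id'
      · simpa using continuous_const
    exact (EuclideanSpace.equiv (Fin 2) ℝ).symm.continuous.comp h1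
  have hcontw : Continuous fun t : ℝ => w (pt t 0) := hw.continuous.comp hpt
  have htrace : (∫ t in (0:ℝ)..h, v (pt t 0)) = 0 := by
    simp only [hv]
    rw [intervalIntegral.integral_sub (hcontw.intervalIntegrable _ _)
      (intervalIntegrable_const)]
    simp [hc]
    field_simp
    ring
  have key := hyp v hvdiff htrace
  have hfd : ∀ x, fderiv ℝ v x = fderiv ℝ w x := by
    intro x
    simp only [hv]
    exact fderiv_sub_const c
  have hrhs : (∫ x in T, ‖fderiv ℝ v x‖ ^ 2) = ∫ x in T, ‖fderiv ℝ w x‖ ^ 2 := by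
    apply setIntegral_congr_fun hTmeas
    intro x _
    simp only [hfd]
  -- integrability
  have hwint : IntegrableOn w T volume :=
    (hw.continuous.continuousOn.integrableOn_compact hcomp).mono_set hTsub
  have hw2int : IntegrableOn (fun x => (w x) ^ 2) T volume :=
    (((hw.continuous.pow 2)).continuousOn.integrableOn_compact hcomp).mono_set hTsub
  have hsplit : (∫ x in T, (v x) ^ 2) =
      (∫ x in T, (w x) ^ 2) + (volume T).toReal * c ^ 2 := by
    have heq : ∀ x, (v x) ^ 2 = (w x) ^ 2 + ((-2 * c) * w x + c ^ 2) := by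
      intro x; simp only [hv]; ring
    have hconst : IntegrableOn (fun _ : EuclideanSpace ℝ (Fin 2) => c ^ 2) T volume :=
      integrableOn_const hvol.ne
    have hlin : IntegrableOn (fun x => -2 * c * w x) T volume := hwint.const_mul (-2 * c)
    have hsum : IntegrableOn (fun x => -2 * c * w x + c ^ 2) T volume := hlin.add hconst
    rw [setIntegral_congr_fun hTmeas (fun x _ => heq x)]
    rw [integral_add hw2int hsum, integral_add hlin hconst]
    rw [integral_const_mul, hw0, setIntegral_const]
    simp [smul_eq_mul, mul_comm, Measure.real]
  have hle : (∫ x in T, (w x) ^ 2) ≤ ∫ x in T, (v x) ^ 2 := by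
    rw [hsplit]
    have : 0 ≤ (volume T).toReal * c ^ 2 := by positivity
    linarith
  calc Real.sqrt (∫ x in T, (w x) ^ 2) ≤ Real.sqrt (∫ x in T, (v x) ^ 2) :=
        Real.sqrt_le_sqrt hle
    _ ≤ C * Real.sqrt (∫ x in T, ‖fderiv ℝ v x‖ ^ 2) := key
    _ = C * Real.sqrt (∫ x in T, ‖fderiv ℝ w x‖ ^ 2) := by rw [hrhs]
end

section
/- There exists a unique z ∈ (0, π) such that sin z · cosh z + cos z · sinh z = 0 (equivalently, on the set where cos z ≠ 0, tan z + tanh z = 0). -/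
open Real

private lemma f_hasDerivAt (x : ℝ) :
    HasDerivAt (fun z : ℝ => Real.sin z * Real.cosh z + Real.cos z * Real.sinh z)
      (2 * Real.cos x * Real.cosh x) x := by
  have h := ((Real.hasDerivAt_sin x).mul (Real.hasDerivAt_cosh x)).add
    ((Real.hasDerivAt_cos x).mul (Real.hasDerivAt_sinh x))
  refine h.congr_deriv ?_
  have := Real.cosh_sq_sub_sinh_sq x
  ring_nf

private lemma f_pos_of_le_half_pi {y : ℝ} (hy0 : 0 < y) (hy : y ≤ π / 2) :
    0 < Real.sin y * Real.cosh y + Real.cos y * Real.sinh y := by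
  have h1 : 0 < Real.sin y := Real.sin_pos_of_pos_of_lt_pi hy0 (lt_of_le_of_lt hy (by linarith [Real.pi_pos]))
  have h2 : 0 < Real.cosh y := Real.cosh_pos y
  have h3 : 0 ≤ Real.cos y := Real.cos_nonneg_of_mem_Icc ⟨by linarith [Real.pi_pos], hy⟩
  have h4 : 0 < Real.sinh y := Real.sinh_pos_iff.2 hy0
  positivity

private lemma f_anti : StrictAntiOn
    (fun z : ℝ => Real.sin z * Real.cosh z + Real.cos z * Real.sinh z)
    (Set.Icc (π / 2) π) := by
  apply strictAntiOn_of_deriv_neg (convex_Icc _ _)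
  · exact (Continuous.add (Real.continuous_sin.mul Real.continuous_cosh)
      (Real.continuous_cos.mul Real.continuous_sinh)).continuousOn
  · intro x hx
    rw [interior_Icc] at hx
    rw [(f_hasDerivAt x).deriv]
    have hc : Real.cos x < 0 := Real.cos_neg_of_pi_div_two_lt_of_lt hx.1 (by linarith [hx.2, Real.pi_pos])
    nlinarith [Real.cosh_pos x]

theorem stmt_17 :
    ∃! z : ℝ, z ∈ Set.Ioo 0 π ∧ Real.sin z * Real.cosh z + Real.cos z * Real.sinh z = 0 := by
  set f : ℝ → ℝ := fun z => Real.sin z * Real.cosh z + Real.cos z * Real.sinh z with hf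
  have hcont : Continuous f := (Real.continuous_sin.mul Real.continuous_cosh).add
      (Real.continuous_cos.mul Real.continuous_sinh)
  have hpi : (0:ℝ) < π := Real.pi_pos
  have hlt : π / 2 < π := by linarith
  have hfa : 0 < f (π / 2) := by
    simp only [hf, Real.sin_pi_div_two, Real.cos_pi_div_two]
    simpa using Real.cosh_pos (π / 2)
  have hfb : f π < 0 := by
    simp only [hf, Real.sin_pi, Real.cos_pi]
    simpa using Real.sinh_pos_iff.2 hpi
  have hiv : (0:ℝ) ∈ f '' Set.Ioo (π / 2) π :=
    intermediate_value_Ioo' (le_of_lt hlt) hcont.continuousOn ⟨hfb, hfa⟩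
  obtain ⟨z, hz, hfz⟩ := hiv
  refine ⟨z, ⟨⟨by linarith [hz.1], hz.2⟩, hfz⟩, ?_⟩
  rintro y ⟨⟨hy0, hy1⟩, hfy⟩
  have hy : π / 2 < y := by
    by_contra h
    push_neg at h
    exact absurd hfy (ne_of_gt (f_pos_of_le_half_pi hy0 h))
  exact f_anti.injOn ⟨le_of_lt hy, le_of_lt hy1⟩ ⟨le_of_lt hz.1, le_of_lt hz.2⟩
    (by show f y = f z; rw [show f z = 0 from hfz]; exact hfy)
end

section
/- Let h > 0 and let ζ ∈ (0, π) satisfy ζ · cos ζ + sin ζ = 0. Define u : ℝ² → ℝ by u(x₁, x₂) = cos(ζ x₁ / h) + cos(ζ (x₂ − h)/h). Then (i) u satisfies the eigenvalue equation −Δu = (ζ/h)² u at every point of ℝ², where Δu = ∂²u/∂x₁² + ∂²u/∂x₂², and (ii) ∫₀^h u(t, 0) dt = 0, i.e. u has zero mean value on the segment Γ = {(t,0) : t ∈ [0,h]}. -/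
open Real intervalIntegral

noncomputable def u18 (h ζ x₁ x₂ : ℝ) : ℝ :=
  Real.cos (ζ * x₁ / h) + Real.cos (ζ * (x₂ - h) / h)

lemma deriv_cos_lin (c d : ℝ) :
    deriv (fun s : ℝ => Real.cos (c * s + d)) = fun s => -c * Real.sin (c * s + d) := by
  funext s
  have h1 : HasDerivAt (fun s : ℝ => c * s + d) c s := by
    simpa using ((hasDerivAt_id s).const_mul c).add_const d
  simpa [mul_comm] using h1.cos.deriv

lemma deriv2_cos_lin (c d C : ℝ) :
    deriv (deriv (fun s : ℝ => Real.cos (c * s + d) + C)) =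
      fun s => -(c ^ 2) * Real.cos (c * s + d) := by
  have e : (deriv (fun s : ℝ => Real.cos (c * s + d) + C)) =
      deriv (fun s => Real.cos (c * s + d)) := by
    funext s; exact deriv_add_const _
  rw [e, deriv_cos_lin]
  funext s
  have h1 : HasDerivAt (fun s : ℝ => c * s + d) c s := by
    simpa using ((hasDerivAt_id s).const_mul c).add_const d
  have h2 := (h1.sin.const_mul (-c)).deriv
  simp only [h2]; ring

theorem stmt_18 (h ζ : ℝ) (hh : 0 < h) (hζ : ζ ∈ Set.Ioo 0 π)
    (hroot : ζ * Real.cos ζ + Real.sin ζ = 0) :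
    (∀ a b : ℝ,
      -(deriv (deriv (fun s => u18 h ζ s b)) a + deriv (deriv (fun s => u18 h ζ a s)) b) =
        (ζ / h) ^ 2 * u18 h ζ a b) ∧
    (∫ t in (0:ℝ)..h, u18 h ζ t 0) = 0 := by
  have hζ0 : ζ ≠ 0 := ne_of_gt hζ.1
  have hh0 : h ≠ 0 := ne_of_gt hh
  constructor
  · intro a b
    have e1 : (fun s => u18 h ζ s b) =
        fun s => Real.cos (ζ / h * s + 0) + Real.cos (ζ * (b - h) / h) := by
      funext s; simp only [u18]; congr 1; ring
    have e2 : (fun s => u18 h ζ a s) =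
        fun s => Real.cos (ζ / h * s + (-ζ)) + Real.cos (ζ * a / h) := by
      funext s; simp only [u18]; rw [add_comm]; congr 1; field_simp; ring
    rw [e1, e2, deriv2_cos_lin, deriv2_cos_lin]
    have A : ζ / h * a + 0 = ζ * a / h := by ring
    have B : ζ / h * b + -ζ = ζ * (b - h) / h := by field_simp; ring
    simp only [A, B, u18]; ring
  · have e : (fun t => u18 h ζ t 0) =
        fun t => Real.cos (ζ / h * t) + Real.cos ζ := by
      funext t; simp only [u18]
      congr 1
      · congr 1; ring
      · rw [show ζ * (0 - h) / h = -ζ by field_simp; ring, Real.cos_neg]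
    rw [intervalIntegral.integral_congr (g := fun t => Real.cos (ζ / h * t) + Real.cos ζ)
      (fun t _ => congrFun e t)]
    have hc : ζ / h ≠ 0 := div_ne_zero hζ0 hh0
    rw [intervalIntegral.integral_add]
    · rw [intervalIntegral.integral_comp_mul_left _ hc, integral_cos,
        intervalIntegral.integral_const]
      have : ζ / h * h = ζ := by field_simp
      rw [this]
      simp only [mul_zero, Real.sin_zero, sub_zero, smul_eq_mul, sub_zero]
      field_simp
      nlinarith [hroot, sq_nonneg h]
    · exact (Real.continuous_cos.comp (continuous_const.mul continuous_id)).intervalIntegrable _ _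
    · exact intervalIntegrable_const
end
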